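/- arXiv:0809.0245 — 2 statements merged into one kernel-verified Lean document; each statement's English description precedes it below -/
import Mathlib

section
/- Let A be a J-antichain in R⁺ and let Φ(A) = {α ∈ R⁺ : α ≥ β for some β ∈ A}. Then Φ(A) is a J-ideal: Φ(A) ∩ R⁺(J) = ∅, and for all α ∈ Φ(A) and β ∈ R⁺ ∪ R(J) with α + β ∈ R, we have α + β ∈ Φ(A). -/
open RealInnerProductSpace

structure RootSys (n : ℕ) where
  R : Set (EuclideanSpace ℝ (Fin n))
  finite : R.Finite
  zero_not_mem : (0 : EuclideanSpace ℝ (Fin n)) ∉ R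
  spans : Submodule.span ℝ R = ⊤
  neg_mem : ∀ α ∈ R, -α ∈ R
  reduced : ∀ α ∈ R, ∀ t : ℝ, t • α ∈ R → t = 1 ∨ t = -1
  reflect_mem : ∀ α ∈ R, ∀ β ∈ R, β - (2 * ⟪α, β⟫ / ⟪α, α⟫) • α ∈ R
  crystal : ∀ α ∈ R, ∀ β ∈ R, ∃ k : ℤ, 2 * ⟪α, β⟫ / ⟪α, α⟫ = (k : ℝ)
  irreducible : ∀ S ⊆ R, (∀ α ∈ S, ∀ β ∈ R \ S, ⟪α, β⟫ = 0) → S = ∅ ∨ S = R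

structure BasedRootSys (n : ℕ) extends RootSys n where
  simple : Fin n → EuclideanSpace ℝ (Fin n)
  simple_mem : ∀ i, simple i ∈ R
  simple_indep : LinearIndependent ℝ simple
  pos_or_neg : ∀ α ∈ R, α ∈ AddSubmonoid.closure (Set.range simple) ∨
      -α ∈ AddSubmonoid.closure (Set.range simple)

namespace BasedRootSys

variable {n : ℕ} (RS : BasedRootSys n)

/-- `Q⁺`, the nonnegative integer span of the simple roots. -/
noncomputable def Qplus : AddSubmonoid (EuclideanSpace ℝ (Fin n)) :=
  AddSubmonoid.closure (Set.range RS.simple)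

/-- The dominance order. -/
def le (α β : EuclideanSpace ℝ (Fin n)) : Prop := β - α ∈ RS.Qplus

/-- The positive roots. -/
def Rpos : Set (EuclideanSpace ℝ (Fin n)) := {α ∈ RS.R | α ∈ RS.Qplus}

end BasedRootSys

namespace BasedRootSys

variable {n : ℕ} (RS : BasedRootSys n)

/-- `R(J)`, the roots supported on `J`. -/
noncomputable def RJ (J : Set (Fin n)) : Set (EuclideanSpace ℝ (Fin n)) :=
  {α ∈ RS.R | α ∈ AddSubgroup.closure (RS.simple '' J)}

/-- `R⁺(J)`, the positive roots supported on `J`. -/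
noncomputable def RposJ (J : Set (Fin n)) : Set (EuclideanSpace ℝ (Fin n)) :=
  RS.RJ J ∩ RS.Rpos

/-- A `J`-antichain in `R⁺`. -/
def IsJAntichain (J : Set (Fin n)) (A : Set (EuclideanSpace ℝ (Fin n))) : Prop :=
  A ⊆ RS.Rpos ∧ A ∩ RS.RposJ J = ∅ ∧
  (∀ α ∈ A, ∀ β ∈ A, α ≠ β → ¬ RS.le α β) ∧
  (∀ α ∈ A, ∀ j ∈ J, α - RS.simple j ∉ RS.R)

/-- The ideal `Φ(A)` generated by `A`. -/
def PhiOf (A : Set (EuclideanSpace ℝ (Fin n))) : Set (EuclideanSpace ℝ (Fin n)) :=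
  {α ∈ RS.Rpos | ∃ β ∈ A, RS.le β α}

/-- A `J`-ideal in `R⁺`. -/
def IsJIdeal (J : Set (Fin n)) (Φ : Set (EuclideanSpace ℝ (Fin n))) : Prop :=
  Φ ⊆ RS.Rpos ∧ Φ ∩ RS.RposJ J = ∅ ∧
  (∀ α ∈ Φ, ∀ β, (β ∈ RS.Rpos ∨ β ∈ RS.RJ J) → α + β ∈ RS.R → α + β ∈ Φ)

/-- The set of minimal elements of a subset of `R⁺` in the dominance order. -/
def minimals (Φ : Set (EuclideanSpace ℝ (Fin n))) : Set (EuclideanSpace ℝ (Fin n)) :=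
  {α ∈ Φ | ∀ β ∈ Φ, RS.le β α → β = α}

end BasedRootSys

/-!
Closure under adding positive roots is immediate. For a negative `β ∈ R(J)` write `β = -δ`, where
`δ` is a sum of simple roots `α_i` with `i ∈ J`, and induct on `δ`. Two facts about roots drive the
argument: roots at an acute angle differ by a root, and hence if `β + γ₁ + γ₂` is a root then so
is `β + γ₁` or `β + γ₂`. The second one lets us subtract `δ - α_i` and `α_i` from `α` one at a
time, reducing to `δ = α_j`. Then `α = γ + ν` with `γ ∈ A` and `ν ∈ Q⁺`; if `ν` involves `α_j`,
then `α - α_j ≥ γ`. Otherwise, climbing from `γ` to `α` by simple roots `α_i` with `i ≠ j` never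
makes `· - α_j` a root, because `γ - α_j` is not one; this contradicts `α - α_j ∈ R`. Finally,
everything below an element supported on `J` is supported on `J`, so `Φ(A)` misses `R⁺(J)`.
-/

namespace RootSys

variable {n : ℕ} (RS : RootSys n)

theorem ne_zero {α : EuclideanSpace ℝ (Fin n)} (hα : α ∈ RS.R) : α ≠ 0 :=
  fun h => RS.zero_not_mem (h ▸ hα)

theorem inner_self_pos {α : EuclideanSpace ℝ (Fin n)} (hα : α ∈ RS.R) : 0 < ⟪α, α⟫ :=
  real_inner_self_pos.mpr (RS.ne_zero hα)

theorem sub_mem_of_inner_pos {α β : EuclideanSpace ℝ (Fin n)} (hα : α ∈ RS.R) (hβ : β ∈ RS.R)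
    (hne : α ≠ β) (h : 0 < ⟪α, β⟫) : α - β ∈ RS.R := by
  obtain ⟨k, hk⟩ := RS.crystal α hα β hβ
  obtain ⟨m, hm⟩ := RS.crystal β hβ α hα
  by_cases hk1 : k = 1
  · have hr := RS.reflect_mem α hα β hβ
    rw [hk, hk1, Int.cast_one, one_smul] at hr
    simpa using RS.neg_mem _ hr
  by_cases hm1 : m = 1
  · have hr := RS.reflect_mem β hβ α hα
    rwa [hm, hm1, Int.cast_one, one_smul] at hr
  exfalso
  have hA := RS.inner_self_pos hα
  have hB := RS.inner_self_pos hβ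
  rw [div_eq_iff hA.ne'] at hk
  rw [real_inner_comm, div_eq_iff hB.ne'] at hm
  have hk2 : (2 : ℝ) ≤ k := by
    have : (0 : ℝ) < k := by nlinarith
    exact_mod_cast (show (0 : ℤ) < k by exact_mod_cast this).lt_of_ne' hk1
  have hm2 : (2 : ℝ) ≤ m := by
    have : (0 : ℝ) < m := by nlinarith
    exact_mod_cast (show (0 : ℤ) < m by exact_mod_cast this).lt_of_ne' hm1
  -- Both Cartan integers are at least 2, which forces equality in Cauchy–Schwarz.
  have hcs : ⟪α, β⟫ = ‖α‖ * ‖β‖ := by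
    refine le_antisymm (real_inner_le_norm α β) ?_
    have hsq : (‖α‖ * ‖β‖) ^ 2 ≤ ⟪α, β⟫ ^ 2 := by
      rw [mul_pow, ← real_inner_self_eq_norm_sq, ← real_inner_self_eq_norm_sq]
      nlinarith [mul_le_mul hk2 hm2 zero_le_two (by linarith)]
    exact (pow_le_pow_iff_left₀ (by positivity) h.le two_ne_zero).mp hsq
  have hβα := (inner_eq_norm_mul_iff_div (RS.ne_zero hα)).mp hcs
  simp only [RCLike.ofReal_real_eq_id, id] at hβα
  rcases RS.reduced α hα _ (hβα ▸ hβ) with h1 | h1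
  · exact hne (by rw [← hβα, h1, one_smul])
  · linarith [show 0 ≤ ‖β‖ / ‖α‖ by positivity]

theorem add_mem_of_inner_neg {α β : EuclideanSpace ℝ (Fin n)} (hα : α ∈ RS.R) (hβ : β ∈ RS.R)
    (hne : α ≠ -β) (h : ⟪α, β⟫ < 0) : α + β ∈ RS.R := by
  simpa using RS.sub_mem_of_inner_pos hα (RS.neg_mem β hβ) hne (by rw [inner_neg_right]; linarith)

theorem inner_nonpos_of_sub_notMem {α β : EuclideanSpace ℝ (Fin n)} (hα : α ∈ RS.R)
    (hβ : β ∈ RS.R) (hne : α ≠ β) (h : α - β ∉ RS.R) : ⟪α, β⟫ ≤ 0 :=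
  not_lt.mp fun hpos => h (RS.sub_mem_of_inner_pos hα hβ hne hpos)

theorem inner_nonneg_of_add_notMem {α β : EuclideanSpace ℝ (Fin n)} (hα : α ∈ RS.R)
    (hβ : β ∈ RS.R) (hne : α ≠ -β) (h : α + β ∉ RS.R) : 0 ≤ ⟪α, β⟫ :=
  not_lt.mp fun hneg => h (RS.add_mem_of_inner_neg hα hβ hne hneg)

theorem add_mem_or_add_mem_of_add_add_mem {β γ₁ γ₂ : EuclideanSpace ℝ (Fin n)} (hβ : β ∈ RS.R)
    (hγ₁ : γ₁ ∈ RS.R) (hγ₂ : γ₂ ∈ RS.R) (hsum : β + γ₁ + γ₂ ∈ RS.R) (h₁₂ : γ₁ + γ₂ ≠ 0)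
    (h₁ : β ≠ -γ₁) (h₂ : β ≠ -γ₂) : β + γ₁ ∈ RS.R ∨ β + γ₂ ∈ RS.R := by
  by_contra! hcon
  obtain ⟨hn₁, hn₂⟩ := hcon
  have hβγ₁ := RS.inner_nonneg_of_add_notMem hβ hγ₁ h₁ hn₁
  have hβγ₂ := RS.inner_nonneg_of_add_notMem hβ hγ₂ h₂ hn₂
  have hσγ₁ : ⟪β + γ₁ + γ₂, γ₁⟫ ≤ 0 :=
    RS.inner_nonpos_of_sub_notMem hsum hγ₁
      (fun h => h₂ (eq_neg_of_add_eq_zero_left (by rwa [add_right_comm, add_eq_right] at h)))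
      (by rwa [add_right_comm, add_sub_cancel_right])
  have hσγ₂ : ⟪β + γ₁ + γ₂, γ₂⟫ ≤ 0 :=
    RS.inner_nonpos_of_sub_notMem hsum hγ₂
      (fun h => h₁ (eq_neg_of_add_eq_zero_left (by rwa [add_eq_right] at h)))
      (by rwa [add_sub_cancel_right])
  -- `‖γ₁ + γ₂‖² = ⟪β + γ₁ + γ₂, γ₁ + γ₂⟫ - ⟪β, γ₁ + γ₂⟫ ≤ 0`
  have hpos := real_inner_self_pos.mpr h₁₂
  simp only [inner_add_left, inner_add_right] at hσγ₁ hσγ₂ hpos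
  linarith

end RootSys

namespace BasedRootSys

variable {n : ℕ} (RS : BasedRootSys n)

noncomputable def simpleBasis : Module.Basis (Fin n) ℝ (EuclideanSpace ℝ (Fin n)) :=
  basisOfLinearIndependentOfCardEqFinrank' RS.simple RS.simple_indep (by simp)

noncomputable def coord (i : Fin n) : EuclideanSpace ℝ (Fin n) →ₗ[ℝ] ℝ :=
  RS.simpleBasis.coord i

theorem coord_simple (i k : Fin n) : RS.coord i (RS.simple k) = if k = i then 1 else 0 := by
  rw [coord, ← coe_basisOfLinearIndependentOfCardEqFinrank' (K := ℝ) RS.simple RS.simple_indep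
    (by simp), ← simpleBasis, Module.Basis.coord_apply, Module.Basis.repr_self,
    Finsupp.single_apply]

noncomputable def simpleSum (s : Multiset (Fin n)) : EuclideanSpace ℝ (Fin n) :=
  (s.map RS.simple).sum

@[simp]
theorem simpleSum_zero : RS.simpleSum 0 = 0 := by simp [simpleSum]

@[simp]
theorem simpleSum_singleton (i : Fin n) : RS.simpleSum {i} = RS.simple i := by simp [simpleSum]

theorem simple_add_simpleSum_erase {s : Multiset (Fin n)} {i : Fin n} (h : i ∈ s) :
    RS.simple i + RS.simpleSum (s.erase i) = RS.simpleSum s :=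
  Multiset.sum_map_erase h

theorem coord_simpleSum (i : Fin n) (s : Multiset (Fin n)) :
    RS.coord i (RS.simpleSum s) = s.count i := by
  induction s using Multiset.induction_on with
  | empty => simp
  | cons k s ih =>
    simp only [simpleSum, Multiset.map_cons, Multiset.sum_cons, map_add] at ih ⊢
    rw [ih, coord_simple, Multiset.count_cons]
    by_cases h : k = i
    · simp [h, add_comm]
    · simp [h, Ne.symm h]

theorem inner_simpleSum (s : Multiset (Fin n)) (x : EuclideanSpace ℝ (Fin n)) :
    ⟪RS.simpleSum s, x⟫ = (s.map fun i => ⟪RS.simple i, x⟫).sum := by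
  induction s using Multiset.induction_on with
  | empty => simp
  | cons k s ih => simpa [simpleSum, inner_add_left] using ih

theorem exists_mem_inner_simple_neg {s : Multiset (Fin n)} {x : EuclideanSpace ℝ (Fin n)}
    (h : ⟪RS.simpleSum s, x⟫ < 0) : ∃ i ∈ s, ⟪RS.simple i, x⟫ < 0 := by
  by_contra! hs
  rw [inner_simpleSum] at h
  exact h.not_ge (Multiset.sum_nonneg (by simpa using hs))

theorem simpleSum_mem_Qplus (s : Multiset (Fin n)) : RS.simpleSum s ∈ RS.Qplus :=
  AddSubmonoid.multiset_sum_mem _ _ fun _ hx => by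
    obtain ⟨i, -, rfl⟩ := Multiset.mem_map.mp hx
    exact AddSubmonoid.subset_closure (Set.mem_range_self i)

theorem mem_Qplus_iff {x : EuclideanSpace ℝ (Fin n)} :
    x ∈ RS.Qplus ↔ ∃ s, RS.simpleSum s = x := by
  refine ⟨fun hx => ?_, fun ⟨s, hs⟩ => hs ▸ RS.simpleSum_mem_Qplus s⟩
  induction hx using AddSubmonoid.closure_induction with
  | mem y hy =>
    obtain ⟨i, rfl⟩ := hy
    exact ⟨{i}, RS.simpleSum_singleton i⟩
  | zero => exact ⟨0, RS.simpleSum_zero⟩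
  | add y z _ _ hy hz =>
    obtain ⟨s, rfl⟩ := hy
    obtain ⟨t, rfl⟩ := hz
    exact ⟨s + t, by simp [simpleSum]⟩

theorem coord_nonneg_of_mem_Qplus {x : EuclideanSpace ℝ (Fin n)} (hx : x ∈ RS.Qplus)
    (i : Fin n) : 0 ≤ RS.coord i x := by
  obtain ⟨s, rfl⟩ := RS.mem_Qplus_iff.mp hx
  rw [coord_simpleSum]
  positivity

theorem coord_nonpos_of_coord_neg {x : EuclideanSpace ℝ (Fin n)} (hx : x ∈ RS.R) {i : Fin n}
    (hi : RS.coord i x < 0) (j : Fin n) : RS.coord j x ≤ 0 := by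
  rcases RS.pos_or_neg x hx with h | h
  · exact absurd (RS.coord_nonneg_of_mem_Qplus h i) hi.not_ge
  · simpa using RS.coord_nonneg_of_mem_Qplus h j

theorem coord_eq_zero_of_mem_closure {J : Set (Fin n)} {x : EuclideanSpace ℝ (Fin n)}
    (hx : x ∈ AddSubgroup.closure (RS.simple '' J)) {i : Fin n} (hi : i ∉ J) :
    RS.coord i x = 0 := by
  induction hx using AddSubgroup.closure_induction with
  | mem y hy =>
    obtain ⟨k, hk, rfl⟩ := hy
    rw [coord_simple, if_neg (ne_of_mem_of_not_mem hk hi)]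
  | zero => simp
  | add y z _ _ hy hz => simp [hy, hz]
  | neg y _ hy => simp [hy]

theorem simpleSum_mem_closure_iff {J : Set (Fin n)} {s : Multiset (Fin n)} :
    RS.simpleSum s ∈ AddSubgroup.closure (RS.simple '' J) ↔ ∀ i ∈ s, i ∈ J := by
  refine ⟨fun h i hi => by_contra fun hiJ => ?_, fun h => ?_⟩
  · have := RS.coord_eq_zero_of_mem_closure h hiJ
    rw [coord_simpleSum, Nat.cast_eq_zero, Multiset.count_eq_zero] at this
    exact this hi
  · refine AddSubgroup.multiset_sum_mem _ _ fun _ hx => ?_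
    obtain ⟨i, hi, rfl⟩ := Multiset.mem_map.mp hx
    exact AddSubgroup.subset_closure (Set.mem_image_of_mem _ (h i hi))

theorem simpleSum_ne_simple {s : Multiset (Fin n)} {j : Fin n} (hj : j ∉ s) :
    RS.simpleSum s ≠ RS.simple j := fun h => by
  simpa [coord_simpleSum, coord_simple, Multiset.count_eq_zero.mpr hj] using
    congrArg (RS.coord j) h

theorem simpleSum_sub_simple_notMem {s : Multiset (Fin n)} {j : Fin n} (hj : j ∉ s)
    (hs : s ≠ 0) : RS.simpleSum s - RS.simple j ∉ RS.R := fun h => by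
  obtain ⟨i, hi⟩ := Multiset.exists_mem_of_ne_zero hs
  have := RS.coord_nonpos_of_coord_neg h (i := j) (by
    simp [coord_simpleSum, coord_simple, Multiset.count_eq_zero.mpr hj]) i
  simp [coord_simpleSum, coord_simple, (ne_of_mem_of_not_mem hi hj).symm, hi] at this

theorem simple_sub_simple_notMem {i j : Fin n} (hij : i ≠ j) :
    RS.simple i - RS.simple j ∉ RS.R := by
  simpa using RS.simpleSum_sub_simple_notMem (s := {i}) (by simpa using hij.symm) (by simp)

theorem ne_neg_simple_of_mem_Qplus {x : EuclideanSpace ℝ (Fin n)} (hx : x ∈ RS.Qplus)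
    (i : Fin n) : x ≠ -RS.simple i := fun h => by
  have := RS.coord_nonneg_of_mem_Qplus hx i
  rw [h, map_neg, coord_simple, if_pos rfl] at this
  linarith

theorem add_simple_ne_simple_of_mem_Qplus {x : EuclideanSpace ℝ (Fin n)} (hx : x ∈ RS.Qplus)
    {i j : Fin n} (hij : i ≠ j) : x + RS.simple i ≠ RS.simple j := fun h => by
  have := congrArg (RS.coord i) h
  rw [map_add, coord_simple, coord_simple, if_pos rfl, if_neg hij.symm] at this
  linarith [RS.coord_nonneg_of_mem_Qplus hx i]

theorem simple_mem_RposJ {J : Set (Fin n)} {j : Fin n} (hj : j ∈ J) :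
    RS.simple j ∈ RS.RposJ J :=
  ⟨⟨RS.simple_mem j, AddSubgroup.subset_closure (Set.mem_image_of_mem _ hj)⟩,
    RS.simple_mem j, AddSubmonoid.subset_closure (Set.mem_range_self j)⟩

theorem simpleSum_mem_RposJ {J : Set (Fin n)} {s : Multiset (Fin n)} (hs : ∀ i ∈ s, i ∈ J)
    (hR : RS.simpleSum s ∈ RS.R) : RS.simpleSum s ∈ RS.RposJ J :=
  ⟨⟨hR, RS.simpleSum_mem_closure_iff.mpr hs⟩, hR, RS.simpleSum_mem_Qplus s⟩

theorem mem_PhiOf {A : Set (EuclideanSpace ℝ (Fin n))} (hA : A ⊆ RS.Rpos)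
    {α γ : EuclideanSpace ℝ (Fin n)} (hα : α ∈ RS.R) (hγ : γ ∈ A) (hγα : RS.le γ α) :
    α ∈ RS.PhiOf A :=
  ⟨⟨hα, by simpa using add_mem (hA hγ).2 hγα⟩, γ, hγ, hγα⟩

theorem add_mem_PhiOf {A : Set (EuclideanSpace ℝ (Fin n))} (hA : A ⊆ RS.Rpos)
    {α ν : EuclideanSpace ℝ (Fin n)} (hα : α ∈ RS.PhiOf A) (hν : ν ∈ RS.Qplus)
    (hαν : α + ν ∈ RS.R) : α + ν ∈ RS.PhiOf A := by
  obtain ⟨-, γ, hγ, hγα⟩ := hα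
  refine RS.mem_PhiOf hA hαν hγ ?_
  simpa [le, add_sub_right_comm] using add_mem hγα hν

theorem notMem_RposJ_of_mem_PhiOf {J : Set (Fin n)} {A : Set (EuclideanSpace ℝ (Fin n))}
    (hA : RS.IsJAntichain J A) {α : EuclideanSpace ℝ (Fin n)} (hα : α ∈ RS.PhiOf A) :
    α ∉ RS.RposJ J := by
  rintro ⟨⟨-, hαJ⟩, -⟩
  obtain ⟨-, γ, hγA, hγα⟩ := hα
  obtain ⟨t, rfl⟩ := RS.mem_Qplus_iff.mp (hA.1 hγA).2
  refine (Set.eq_empty_iff_forall_notMem.mp hA.2.1) _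
    ⟨hγA, RS.simpleSum_mem_RposJ (fun i hi => by_contra fun hiJ => ?_) (hA.1 hγA).1⟩
  -- The `i`-th coordinate vanishes on `α` but not on `simpleSum t ≤ α`.
  have h := RS.coord_nonneg_of_mem_Qplus hγα i
  rw [map_sub, RS.coord_eq_zero_of_mem_closure hαJ hiJ, coord_simpleSum] at h
  have : (0 : ℝ) < Multiset.count i t := by exact_mod_cast Multiset.count_pos.mpr hi
  linarith

theorem add_simpleSum_sub_simple_notMem {j : Fin n} {s : Multiset (Fin n)} (hjs : j ∉ s) :
    ∀ {γ : EuclideanSpace ℝ (Fin n)}, γ ∈ RS.R → γ ∈ RS.Qplus → γ ≠ RS.simple j →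
      γ - RS.simple j ∉ RS.R → γ + RS.simpleSum s ∈ RS.R →
      γ + RS.simpleSum s - RS.simple j ∉ RS.R := by
  induction s using Multiset.strongInductionOn with
  | ih s ih =>
  intro γ hγ hγQ hγj hγj' hγν hτ
  rcases eq_or_ne s 0 with rfl | hs
  · simp only [simpleSum_zero, add_zero] at hτ
    exact hγj' hτ
  have hγ_j := RS.inner_nonpos_of_sub_notMem hγ (RS.simple_mem j) hγj hγj'
  have hτ_γ : ⟪γ + RS.simpleSum s - RS.simple j, γ⟫ ≤ 0 := by
    refine RS.inner_nonpos_of_sub_notMem hτ hγ (fun h => RS.simpleSum_ne_simple hjs ?_) ?_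
    · rwa [add_sub_assoc, add_eq_left, sub_eq_zero] at h
    · rw [show γ + RS.simpleSum s - RS.simple j - γ = RS.simpleSum s - RS.simple j by abel]
      exact RS.simpleSum_sub_simple_notMem hjs hs
  -- Move some `α_i`, `i ∈ s`, with `⟪α_i, γ⟫ < 0` from `simpleSum s` to `γ` and recurse.
  obtain ⟨i, his, hi⟩ : ∃ i ∈ s, ⟪RS.simple i, γ⟫ < 0 := by
    refine RS.exists_mem_inner_simple_neg ?_
    have := RS.inner_self_pos hγ
    simp only [inner_sub_left, inner_add_left] at hτ_γ
    rw [real_inner_comm] at hγ_j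
    linarith
  have hij : i ≠ j := ne_of_mem_of_not_mem his hjs
  have hγ_ne := RS.ne_neg_simple_of_mem_Qplus hγQ i
  have hγi := RS.add_mem_of_inner_neg hγ (RS.simple_mem i) hγ_ne (by rwa [real_inner_comm])
  -- Neither `γ - α_j` nor `α_i - α_j` is a root.
  have hγi_j : γ + RS.simple i - RS.simple j ∉ RS.R := fun h => by
    rcases RS.add_mem_or_add_mem_of_add_add_mem (RS.neg_mem _ (RS.simple_mem j)) hγ
        (RS.simple_mem i) (by convert h using 1; abel)
        (fun h => hγ_ne (eq_neg_of_add_eq_zero_left h)) (fun h => hγj (neg_inj.mp h).symm)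
        (fun h => hij (RS.simple_indep.injective (neg_inj.mp h)).symm) with h | h
    · exact hγj' (by rwa [neg_add_eq_sub] at h)
    · exact RS.simple_sub_simple_notMem hij (by rwa [neg_add_eq_sub] at h)
  refine ih (s.erase i) (Multiset.erase_lt.mpr his) (fun h => hjs (Multiset.mem_of_mem_erase h))
    hγi (add_mem hγQ (RS.simpleSum_singleton i ▸ RS.simpleSum_mem_Qplus {i}))
    (RS.add_simple_ne_simple_of_mem_Qplus hγQ hij) hγi_j ?_ ?_
  all_goals rwa [add_assoc, RS.simple_add_simpleSum_erase his]

theorem sub_simple_mem_PhiOf {J : Set (Fin n)} {A : Set (EuclideanSpace ℝ (Fin n))}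
    (hA : RS.IsJAntichain J A) {j : Fin n} (hj : j ∈ J) {α : EuclideanSpace ℝ (Fin n)}
    (hα : α ∈ RS.PhiOf A) (hαj : α - RS.simple j ∈ RS.R) : α - RS.simple j ∈ RS.PhiOf A := by
  obtain ⟨⟨hαR, -⟩, γ, hγA, hγα⟩ := hα
  obtain ⟨s, hs⟩ := RS.mem_Qplus_iff.mp hγα
  by_cases hjs : j ∈ s
  · refine RS.mem_PhiOf hA.1 hαj hγA (RS.mem_Qplus_iff.mpr ⟨s.erase j, ?_⟩)
    rw [sub_right_comm, ← hs, ← RS.simple_add_simpleSum_erase hjs, add_sub_cancel_left]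
  · have hγα' : γ + RS.simpleSum s = α := by rw [hs, add_sub_cancel]
    have hγj : γ ≠ RS.simple j := fun h =>
      (Set.eq_empty_iff_forall_notMem.mp hA.2.1) γ ⟨hγA, h ▸ RS.simple_mem_RposJ hj⟩
    exact absurd (hγα' ▸ hαj) (RS.add_simpleSum_sub_simple_notMem hjs (hA.1 hγA).1
      (hA.1 hγA).2 hγj (hA.2.2.2 γ hγA j hj) (hγα' ▸ hαR))

theorem sub_simpleSum_mem_PhiOf {J : Set (Fin n)} {A : Set (EuclideanSpace ℝ (Fin n))}
    (hA : RS.IsJAntichain J A) {s : Multiset (Fin n)} (hsJ : ∀ i ∈ s, i ∈ J) :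
    RS.simpleSum s ∈ RS.R → ∀ {α : EuclideanSpace ℝ (Fin n)}, α ∈ RS.PhiOf A →
      α - RS.simpleSum s ∈ RS.R → α - RS.simpleSum s ∈ RS.PhiOf A := by
  induction s using Multiset.strongInductionOn with
  | ih s ih =>
  intro hδ α hα hαδ
  obtain ⟨i, his, hi⟩ : ∃ i ∈ s, 0 < ⟪RS.simple i, RS.simpleSum s⟫ := by
    simpa using RS.exists_mem_inner_simple_neg (x := -RS.simpleSum s)
      (by simpa using RS.inner_self_pos hδ)
  have hiJ := hsJ i his
  by_cases hδi : RS.simpleSum s = RS.simple i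
  · rw [hδi] at hαδ ⊢
    exact RS.sub_simple_mem_PhiOf hA hiJ hα hαδ
  -- Split `simpleSum s = (simpleSum s - α_i) + α_i` and subtract the two roots from `α` in turn.
  have hδ' := RS.sub_mem_of_inner_pos hδ (RS.simple_mem i) hδi (by rwa [real_inner_comm])
  have herase : RS.simpleSum (s.erase i) = RS.simpleSum s - RS.simple i :=
    eq_sub_of_add_eq' (RS.simple_add_simpleSum_erase his)
  have ih' := @ih (s.erase i) (Multiset.erase_lt.mpr his)
    (fun k hk => hsJ k (Multiset.mem_of_mem_erase hk)) (herase ▸ hδ')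
  rw [herase] at ih'
  have hα_ne_i : α ≠ RS.simple i := fun h =>
    RS.notMem_RposJ_of_mem_PhiOf hA hα (h ▸ RS.simple_mem_RposJ hiJ)
  have hα_ne_δ' : α ≠ RS.simpleSum s - RS.simple i := fun h =>
    RS.notMem_RposJ_of_mem_PhiOf hA hα (h ▸ herase ▸ RS.simpleSum_mem_RposJ
      (fun k hk => hsJ k (Multiset.mem_of_mem_erase hk)) (herase ▸ hδ'))
  rcases RS.add_mem_or_add_mem_of_add_add_mem hαδ hδ' (RS.simple_mem i)
      (by simpa using hα.1.1) (by simpa using RS.ne_zero hδ)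
      (fun h => hα_ne_i (by rw [sub_eq_iff_eq_add.mp h]; abel))
      (fun h => hα_ne_δ' (by rw [sub_eq_iff_eq_add.mp h]; abel))
    with h | h
  · have h1 := RS.sub_simple_mem_PhiOf hA hiJ hα (by simpa using h)
    simpa using ih' h1 (by rwa [sub_sub_sub_cancel_right])
  · have h1 := ih' hα (by simpa [sub_add] using h)
    rw [← sub_add_cancel (RS.simpleSum s) (RS.simple i), ← sub_sub]
    exact RS.sub_simple_mem_PhiOf hA hiJ h1 (by rwa [sub_sub, sub_add_cancel])

end BasedRootSys

/-- If `A` is a `J`-antichain, then `Φ(A)` is a `J`-ideal. -/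
theorem stmt_4 {n : ℕ} (RS : BasedRootSys n) (J : Set (Fin n))
    (A : Set (EuclideanSpace ℝ (Fin n))) (hA : RS.IsJAntichain J A) :
    RS.IsJIdeal J (RS.PhiOf A) := by
  refine ⟨fun α hα => hα.1, Set.eq_empty_iff_forall_notMem.mpr fun α hα =>
    RS.notMem_RposJ_of_mem_PhiOf hA hα.1 hα.2, fun α hα β hβ hαβ => ?_⟩
  by_cases hβQ : β ∈ RS.Qplus
  · exact RS.add_mem_PhiOf hA.1 hα hβQ hαβ
  have hβJ : β ∈ RS.RJ J := hβ.resolve_left fun h => hβQ h.2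
  obtain ⟨s, hs⟩ := RS.mem_Qplus_iff.mp ((RS.pos_or_neg β hβJ.1).resolve_left hβQ)
  have hsJ := RS.simpleSum_mem_closure_iff.mp (hs ▸ neg_mem hβJ.2)
  simpa [hs] using RS.sub_simpleSum_mem_PhiOf hA hsJ (hs ▸ RS.neg_mem β hβJ.1) hα
    (by simpa [hs] using hαβ)
end

section
/- Let A be an antichain in R⁺. The ideal Φ(A) is abelian (no sum of two elements of Φ(A) is a root) if and only if: (1) for all distinct α, β ∈ A there exists i ∈ I with d_i(α) + d_i(β) > d_i(θ), and (2) for every α ∈ A there exists i ∈ I with 2 d_i(α) > d_i(θ). -/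
open RealInnerProductSpace

/-!
An ideal `Φ(A)` fails to be abelian exactly when `α + β ≤ θ` for some `α, β ∈ A`, and since
`α`, `β`, `θ` have nonnegative integer coordinates, `α + β ≤ θ` means `d_i(α) + d_i(β) ≤ d_i(θ)`
for all `i`. If `γ + δ` is a root with `α ≤ γ`, `β ≤ δ`, then `α + β ≤ γ + δ ≤ θ`. Conversely, if
`v = θ - α - β ≥ 0` is nonzero, then `0 < ⟪v, v⟫ = ∑ d_i(v) ⟪v, α_i⟫` gives an `i` with
`d_i(v) > 0` and `⟪v, α_i⟫ > 0`; hence `⟪θ, α_i⟫ > 0`, `⟪α, α_i⟫ < 0` or `⟪β, α_i⟫ < 0`, so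
`θ - α_i`, `α + α_i` or `β + α_i` is a root. Each case lowers the height of `v` by one, and
induction produces positive roots `μ ≥ α`, `ν ≥ β` with `μ + ν` a root.
-/

namespace BasedRootSys

variable {n : ℕ} (RS : BasedRootSys n)

local notation "E" => EuclideanSpace ℝ (Fin n)

noncomputable def basis : Module.Basis (Fin n) ℝ E :=
  basisOfLinearIndependentOfCardEqFinrank' RS.simple RS.simple_indep (by simp)

@[simp]
lemma coe_basis : ⇑RS.basis = RS.simple :=
  coe_basisOfLinearIndependentOfCardEqFinrank' ..

protected lemma le_refl (v : E) : RS.le v v := by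
  simp only [le, sub_self, zero_mem]

protected lemma le_trans {u v w : E} (huv : RS.le u v) (hvw : RS.le v w) : RS.le u w := by
  simpa only [le, sub_add_sub_cancel] using add_mem hvw huv

protected lemma add_le_add {u v u' v' : E} (hu : RS.le u u') (hv : RS.le v v') :
    RS.le (u + v) (u' + v') := by
  simpa only [le, add_sub_add_comm] using add_mem hu hv

noncomputable def height (v : E) : ℝ := ∑ i, RS.basis.repr v i

variable {RS}

lemma repr_eq_of_eq_sum {v : E} {c : Fin n → ℝ} (h : v = ∑ i, c i • RS.simple i) :
    ⇑(RS.basis.repr v) = c := by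
  rw [h, ← RS.coe_basis, Module.Basis.repr_sum_self]

lemma simple_mem_Qplus (i : Fin n) : RS.simple i ∈ RS.Qplus :=
  AddSubmonoid.subset_closure (Set.mem_range_self i)

lemma le_add_simple (v : E) (i : Fin n) : RS.le v (v + RS.simple i) := by
  simpa only [le, add_sub_cancel_left] using simple_mem_Qplus i

lemma mem_Qplus_iff_s7 {v : E} : v ∈ RS.Qplus ↔ ∀ i, ∃ k : ℕ, RS.basis.repr v i = k := by
  rw [Qplus, AddSubmonoid.mem_closure_range_iff_of_fintype]
  constructor
  · rintro ⟨k, rfl⟩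
    simp_rw [← Nat.cast_smul_eq_nsmul ℝ]
    rw [← RS.coe_basis, Module.Basis.repr_sum_self]
    exact fun i => ⟨k i, rfl⟩
  · intro h
    choose k hk using h
    refine ⟨k, ?_⟩
    conv_lhs => rw [← RS.basis.sum_repr v]
    simp [hk, Nat.cast_smul_eq_nsmul]

lemma repr_nonneg {v : E} (hv : v ∈ RS.Qplus) (i : Fin n) : 0 ≤ RS.basis.repr v i := by
  obtain ⟨k, hk⟩ := mem_Qplus_iff_s7.1 hv i
  rw [hk]
  positivity

lemma le_iff_repr_le {u v : E} (hu : u ∈ RS.Qplus) (hv : v ∈ RS.Qplus) :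
    RS.le u v ↔ ∀ i, RS.basis.repr u i ≤ RS.basis.repr v i := by
  refine ⟨fun h i => by simpa using repr_nonneg h i, fun h => mem_Qplus_iff_s7.2 fun i => ?_⟩
  obtain ⟨a, ha⟩ := mem_Qplus_iff_s7.1 hu i
  obtain ⟨b, hb⟩ := mem_Qplus_iff_s7.1 hv i
  have hab : a ≤ b := by exact_mod_cast ha ▸ hb ▸ h i
  exact ⟨b - a, by simp [ha, hb, Nat.cast_sub hab]⟩

lemma eq_zero_of_add_eq_zero {u v : E} (hu : u ∈ RS.Qplus) (hv : v ∈ RS.Qplus) (h : u + v = 0) :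
    u = 0 := by
  refine RS.basis.ext_elem fun i => ?_
  have hi := congrArg (fun w => RS.basis.repr w i) h
  simp only [map_add, Finsupp.add_apply, map_zero, Finsupp.coe_zero, Pi.zero_apply] at hi ⊢
  linarith [repr_nonneg hu i, repr_nonneg hv i]

lemma sub_simple_mem_Qplus {v : E} (hv : v ∈ RS.Qplus) {i : Fin n}
    (hi : 0 < RS.basis.repr v i) : v - RS.simple i ∈ RS.Qplus := by
  refine (le_iff_repr_le (simple_mem_Qplus i) hv).2 fun j => ?_
  rw [← RS.coe_basis, Module.Basis.repr_self, Finsupp.single_apply]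
  split_ifs with hij
  · subst hij
    obtain ⟨k, hk⟩ := mem_Qplus_iff_s7.1 hv i
    rw [hk] at hi ⊢
    exact_mod_cast hi
  · exact repr_nonneg hv j

lemma height_nonneg {v : E} (hv : v ∈ RS.Qplus) : 0 ≤ RS.height v :=
  Finset.sum_nonneg fun i _ => repr_nonneg hv i

lemma height_sub_simple (v : E) (i : Fin n) : RS.height (v - RS.simple i) = RS.height v - 1 := by
  rw [height, height, ← RS.coe_basis]
  simp [-coe_basis, Finset.sum_sub_distrib, Finsupp.single_apply]

lemma inner_self_pos {α : E} (hα : α ∈ RS.R) : 0 < ⟪α, α⟫ :=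
  real_inner_self_pos.2 (ne_of_mem_of_not_mem hα RS.zero_not_mem)

lemma sq_inner_lt_of_inner_neg {α β : E} (hα : α ∈ RS.R) (hβ : β ∈ RS.R) (hneg : ⟪α, β⟫ < 0)
    (hne : α ≠ -β) : ⟪α, β⟫ ^ 2 < ⟪α, α⟫ * ⟪β, β⟫ := by
  have hlt : ⟪-α, β⟫ < ‖-α‖ * ‖β‖ := by
    rw [inner_lt_norm_mul_iff_real, norm_neg]
    intro heq
    have hα0 : ‖α‖ ≠ 0 := norm_ne_zero_iff.2 (ne_of_mem_of_not_mem hα RS.zero_not_mem)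
    have hβα : (-(‖β‖ / ‖α‖)) • α = β := by
      rw [neg_smul, ← smul_neg, div_eq_inv_mul, mul_smul, heq, ← mul_smul, inv_mul_cancel₀ hα0,
        one_smul]
    rcases RS.reduced α hα _ (hβα ▸ hβ) with h | h
    · have : 0 ≤ ‖β‖ / ‖α‖ := by positivity
      linarith
    · rw [h, neg_one_smul] at hβα
      exact hne (by rw [← hβα, neg_neg])
  rw [inner_neg_left, norm_neg] at hlt
  rw [real_inner_self_eq_norm_sq, real_inner_self_eq_norm_sq]
  nlinarith

/- The Cartan integers `2⟪α, β⟫/⟪α, α⟫` and `2⟪α, β⟫/⟪β, β⟫` are negative with product `< 4`,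
so one of them is `-1`, and the corresponding reflection sends `β` or `α` to `α + β`. -/
lemma add_mem_R_of_inner_neg {α β : E} (hα : α ∈ RS.R) (hβ : β ∈ RS.R) (hneg : ⟪α, β⟫ < 0)
    (hne : α ≠ -β) : α + β ∈ RS.R := by
  obtain ⟨k, hk⟩ := RS.crystal α hα β hβ
  obtain ⟨l, hl⟩ := RS.crystal β hβ α hα
  rw [real_inner_comm] at hl
  have hαα := inner_self_pos hα
  have hββ := inner_self_pos hβ
  have hk0 : (k : ℝ) < 0 := hk ▸ div_neg_of_neg_of_pos (by linarith) hαα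
  have hl0 : (l : ℝ) < 0 := hl ▸ div_neg_of_neg_of_pos (by linarith) hββ
  have hkl : (k : ℝ) * l < 4 := by
    rw [← hk, ← hl, div_mul_div_comm, div_lt_iff₀ (by positivity)]
    nlinarith [sq_inner_lt_of_inner_neg hα hβ hneg hne]
  have hk0' : k < 0 := by exact_mod_cast hk0
  have hl0' : l < 0 := by exact_mod_cast hl0
  have hkl' : k * l < 4 := by exact_mod_cast hkl
  obtain rfl | rfl : k = -1 ∨ l = -1 := by
    by_contra! h
    have : k ≤ -2 := by omega
    have : l ≤ -2 := by omega
    nlinarith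
  · have h := RS.reflect_mem α hα β hβ
    rw [hk] at h
    simpa [add_comm] using h
  · have h := RS.reflect_mem β hβ α hα
    rw [real_inner_comm, hl] at h
    simpa using h

lemma add_simple_mem_Rpos {μ : E} (hμ : μ ∈ RS.Rpos) {i : Fin n}
    (hi : ⟪μ, RS.simple i⟫ < 0) : μ + RS.simple i ∈ RS.Rpos := by
  refine ⟨add_mem_R_of_inner_neg hμ.1 (RS.simple_mem i) hi fun h => ?_,
    add_mem hμ.2 (simple_mem_Qplus i)⟩
  have hμ0 : μ = 0 := eq_zero_of_add_eq_zero hμ.2 (simple_mem_Qplus i) (by simp [h])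
  exact RS.zero_not_mem (hμ0 ▸ hμ.1)

lemma sub_simple_mem_R {lam : E} (hlam : lam ∈ RS.R) {i : Fin n}
    (hi : 0 < ⟪lam, RS.simple i⟫) (hne : lam ≠ RS.simple i) : lam - RS.simple i ∈ RS.R := by
  rw [sub_eq_add_neg]
  exact add_mem_R_of_inner_neg hlam (RS.neg_mem _ (RS.simple_mem i))
    (by simpa [inner_neg_right] using hi) (by simpa using hne)

lemma exists_repr_pos_inner_pos {v : E} (hv : v ∈ RS.Qplus) (hv0 : v ≠ 0) :
    ∃ i, 0 < RS.basis.repr v i ∧ 0 < ⟪v, RS.simple i⟫ := by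
  have hsum : ⟪v, v⟫ = ∑ i, RS.basis.repr v i * ⟪v, RS.simple i⟫ := calc
    ⟪v, v⟫ = ⟪v, ∑ i, RS.basis.repr v i • RS.basis i⟫ := by rw [RS.basis.sum_repr]
    _ = _ := by simp [inner_sum, real_inner_smul_right]
  obtain ⟨i, -, hi⟩ : ∃ i ∈ Finset.univ, 0 < RS.basis.repr v i * ⟪v, RS.simple i⟫ :=
    Finset.exists_lt_of_sum_lt (by simpa [← hsum] using real_inner_self_pos.2 hv0)
  exact ⟨i, (pos_and_pos_or_neg_and_neg_of_mul_pos hi).resolve_right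
    fun h => (repr_nonneg hv i).not_gt h.1⟩

theorem exists_add_mem_R_of_le {lam μ ν : E} (hlam : lam ∈ RS.R) (hμ : μ ∈ RS.Rpos)
    (hν : ν ∈ RS.Rpos) (hle : RS.le (μ + ν) lam) :
    ∃ μ' ν', μ' ∈ RS.Rpos ∧ ν' ∈ RS.Rpos ∧ RS.le μ μ' ∧ RS.le ν ν' ∧ μ' + ν' ∈ RS.R := by
  obtain ⟨m, hm⟩ := exists_nat_gt (RS.height (lam - (μ + ν)))
  induction m generalizing lam μ ν with
  | zero => exact absurd hm (not_lt.2 (by simpa using height_nonneg hle))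
  | succ m ih =>
    obtain h0 | h0 := eq_or_ne (lam - (μ + ν)) 0
    · exact ⟨μ, ν, hμ, hν, RS.le_refl μ, RS.le_refl ν, sub_eq_zero.1 h0 ▸ hlam⟩
    obtain ⟨i, hi, hinner⟩ := exists_repr_pos_inner_pos hle h0
    have hle' : lam - (μ + ν) - RS.simple i ∈ RS.Qplus := sub_simple_mem_Qplus hle hi
    have hm' : RS.height (lam - (μ + ν) - RS.simple i) < m := by
      rw [height_sub_simple]
      push_cast at hm
      linarith
    rw [inner_sub_left, inner_add_left] at hinner
    by_cases hμi : ⟪μ, RS.simple i⟫ < 0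
    · have e : lam - (μ + RS.simple i + ν) = lam - (μ + ν) - RS.simple i := by abel
      obtain ⟨μ', ν', hμ', hν', hμμ', hνν', hroot⟩ :=
        ih hlam (add_simple_mem_Rpos hμ hμi) hν (by rwa [le, e]) (by rwa [e])
      exact ⟨μ', ν', hμ', hν', RS.le_trans (le_add_simple μ i) hμμ', hνν', hroot⟩
    by_cases hνi : ⟪ν, RS.simple i⟫ < 0
    · have e : lam - (μ + (ν + RS.simple i)) = lam - (μ + ν) - RS.simple i := by abel
      obtain ⟨μ', ν', hμ', hν', hμμ', hνν', hroot⟩ :=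
        ih hlam hμ (add_simple_mem_Rpos hν hνi) (by rwa [le, e]) (by rwa [e])
      exact ⟨μ', ν', hμ', hν', hμμ', RS.le_trans (le_add_simple ν i) hνν', hroot⟩
    have hne : lam ≠ RS.simple i := by
      rintro rfl
      refine RS.zero_not_mem (eq_zero_of_add_eq_zero hμ.2 (add_mem hν.2 hle') ?_ ▸ hμ.1)
      abel
    have e : lam - RS.simple i - (μ + ν) = lam - (μ + ν) - RS.simple i := by abel
    exact ih (sub_simple_mem_R hlam (by linarith) hne) hμ hν (by rwa [le, e]) (by rwa [e])

theorem phiOf_abelian_iff {θ : E} (hθ : θ ∈ RS.R) (hθmax : ∀ α ∈ RS.R, RS.le α θ)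
    {A : Set E} (hA : A ⊆ RS.Rpos) :
    (∀ α ∈ RS.PhiOf A, ∀ β ∈ RS.PhiOf A, α + β ∉ RS.R) ↔
      ∀ α ∈ A, ∀ β ∈ A, ¬ RS.le (α + β) θ := by
  constructor
  · intro habel α hα β hβ hle
    obtain ⟨μ, ν, hμ, hν, hαμ, hβν, hroot⟩ := exists_add_mem_R_of_le hθ (hA hα) (hA hβ) hle
    exact habel μ ⟨hμ, α, hα, hαμ⟩ ν ⟨hν, β, hβ, hβν⟩ hroot
  · rintro h γ ⟨-, α, hα, hαγ⟩ δ ⟨-, β, hβ, hβδ⟩ hroot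
    exact h α hα β hβ (RS.le_trans (RS.add_le_add hαγ hβδ) (hθmax _ hroot))

end BasedRootSys

/-- An antichain `A` generates an abelian ideal iff (1) for distinct `α, β ∈ A`
there is `i` with `d_i α + d_i β > d_i θ`, and (2) for each `α ∈ A` there is `i`
with `2 d_i α > d_i θ`. -/
theorem stmt_7 {n : ℕ} (RS : BasedRootSys n) (θ : EuclideanSpace ℝ (Fin n))
    (hθpos : θ ∈ RS.Rpos) (hθmax : ∀ α ∈ RS.R, RS.le α θ)
    (d : EuclideanSpace ℝ (Fin n) → Fin n → ℝ)
    (hd : ∀ v, v = ∑ i, d v i • RS.simple i)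
    (A : Set (EuclideanSpace ℝ (Fin n))) (hA : RS.IsJAntichain ∅ A) :
    (∀ α ∈ RS.PhiOf A, ∀ β ∈ RS.PhiOf A, α + β ∉ RS.R) ↔
    ((∀ α ∈ A, ∀ β ∈ A, α ≠ β → ∃ i, d θ i < d α i + d β i) ∧
     (∀ α ∈ A, ∃ i, d θ i < 2 * d α i)) := by
  obtain rfl : d = fun v => ⇑(RS.basis.repr v) :=
    funext fun v => (BasedRootSys.repr_eq_of_eq_sum (hd v)).symm
  have hcoord : ∀ α ∈ A, ∀ β ∈ A, ¬ RS.le (α + β) θ ↔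
      ∃ i, RS.basis.repr θ i < RS.basis.repr α i + RS.basis.repr β i := fun α hα β hβ => by
    simp [BasedRootSys.le_iff_repr_le (add_mem (hA.1 hα).2 (hA.1 hβ).2) hθpos.2]
  rw [BasedRootSys.phiOf_abelian_iff hθpos.1 hθmax hA.1]
  constructor
  · intro h
    refine ⟨fun α hα β hβ _ => (hcoord α hα β hβ).1 (h α hα β hβ), fun α hα => ?_⟩
    simpa [two_mul] using (hcoord α hα α hα).1 (h α hα α hα)
  · rintro ⟨hdistinct, hself⟩ α hα β hβ
    obtain rfl | hαβ := eq_or_ne α β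
    · exact (hcoord α hα α hα).2 (by simpa [two_mul] using hself α hα)
    · exact (hcoord α hα β hβ).2 (hdistinct α hα β hβ hαβ)
end
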